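/- arXiv:1210.7383 — 6 statements merged into one kernel-verified Lean document; each statement's English description precedes it below -/
import Mathlib

section
/- Let ℓ be a log-scale on a set X with constant Δ > 0, i.e. ℓ : X × X → ℝ ∪ {∞} is symmetric, ℓ(x,y) = ∞ iff x = y, and ℓ(x,z) ≥ min(ℓ(x,y), ℓ(y,z)) − Δ for all x,y,z. For n ∈ ℝ let Γ_n be the graph on vertex set X where x,y are adjacent iff ℓ(x,y) ≥ n, and let d_n denote graph distance in Γ_n. Then with α = (log 2)/Δ there exists C > 0 such that d_n(x,y) ≥ C·e^{α(n − ℓ(x,y))} for all x ≠ y in X and all n. -/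
/-- A log-scale on a set `X` with constant `Δ`: a symmetric function to `ℝ ∪ {∞}`
(modelled as `EReal`, never taking the value `⊥`), infinite exactly on the diagonal,
satisfying the weak ultrametric inequality with constant `Δ`. -/
def IsLogScale {X : Type*} (ℓ : X → X → EReal) (Δ : ℝ) : Prop :=
  0 < Δ ∧
  (∀ x y, ℓ x y = ℓ y x) ∧
  (∀ x y, ℓ x y = ⊤ ↔ x = y) ∧
  (∀ x y, ℓ x y ≠ ⊥) ∧
  (∀ x y z, min (ℓ x y) (ℓ y z) - (Δ : EReal) ≤ ℓ x z)

/-! A chain of `m ≤ 2 ^ k` steps, each of `ℓ`-value at least `n`, splits into two chains of at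
most `2 ^ (k - 1)` steps, so `k` applications of the weak ultrametric inequality give
`ℓ(x, y) ≥ n - kΔ`. Taking `k = ⌊log₂ m⌋ + 1`, so that `2 ^ k ≤ 2m`, this reads
`m ≥ 2 ^ {(n - ℓ(x, y))/Δ} / 2 = e^{α(n - ℓ(x, y))} / 2`. -/

namespace IsLogScale

variable {X : Type*} {ℓ : X → X → EReal} {Δ : ℝ}

theorem sub_mul_le_of_chain (h : IsLogScale ℓ Δ) (n : ℝ) (k : ℕ) :
    ∀ (m : ℕ) (c : ℕ → X), m ≤ 2 ^ k → (∀ i < m, (n : EReal) ≤ ℓ (c i) (c (i + 1))) →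
      ((n - k * Δ : ℝ) : EReal) ≤ ℓ (c 0) (c m) := by
  obtain ⟨-, -, htop, -, hultra⟩ := h
  induction k with
  | zero =>
    intro m c hm hc
    obtain rfl | rfl : m = 0 ∨ m = 1 := by simp at hm; omega
    · simp [(htop _ _).2 rfl]
    · simpa using hc 0 one_pos
  | succ k ih =>
    intro m c hm hc
    set j := min m (2 ^ k)
    have hfirst : ((n - k * Δ : ℝ) : EReal) ≤ ℓ (c 0) (c j) :=
      ih j c (min_le_right _ _) fun i hi => hc i (hi.trans_le (min_le_left _ _))
    have hsecond : ((n - k * Δ : ℝ) : EReal) ≤ ℓ (c j) (c m) := by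
      have hsplit : j + (m - j) = m := by omega
      have := ih (m - j) (fun i => c (j + i)) (by rw [pow_succ] at hm; omega)
        fun i hi => by simpa [Nat.add_assoc] using hc (j + i) (by omega)
      simpa [hsplit] using this
    calc ((n - (k + 1 : ℕ) * Δ : ℝ) : EReal)
        = ((n - k * Δ : ℝ) : EReal) - (Δ : EReal) := by
          rw [← EReal.coe_sub]; congr 1; push_cast; ring
      _ ≤ min (ℓ (c 0) (c j)) (ℓ (c j) (c m)) - (Δ : EReal) :=
          EReal.sub_le_sub (le_min hfirst hsecond) le_rfl
      _ ≤ ℓ (c 0) (c m) := hultra _ _ _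

theorem le_toReal_of_ne (h : IsLogScale ℓ Δ) {a : ℝ} {x y : X} (hxy : x ≠ y)
    (ha : (a : EReal) ≤ ℓ x y) : a ≤ (ℓ x y).toReal := by
  have hne_top : ℓ x y ≠ ⊤ := fun htop => hxy ((h.2.2.1 x y).1 htop)
  simpa using EReal.toReal_le_toReal ha (EReal.coe_ne_bot a) hne_top

end IsLogScale

theorem two_pow_log_succ_le {m : ℕ} (hm : m ≠ 0) : 2 ^ (Nat.log 2 m + 1) ≤ 2 * m := by
  rw [pow_succ']
  exact Nat.mul_le_mul_left 2 (Nat.pow_log_le_self 2 hm)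

theorem exp_log_two_div_mul_le_two_pow {Δ a t : ℝ} (hΔ : 0 < Δ) (k : ℕ) (h : a - k * Δ ≤ t) :
    Real.exp (Real.log 2 / Δ * (a - t)) ≤ 2 ^ k := by
  have hα : 0 ≤ Real.log 2 / Δ := div_nonneg (Real.log_nonneg one_le_two) hΔ.le
  calc Real.exp (Real.log 2 / Δ * (a - t))
      ≤ Real.exp (Real.log 2 / Δ * (k * Δ)) :=
        Real.exp_le_exp.2 (mul_le_mul_of_nonneg_left (by linarith) hα)
    _ = 2 ^ k := by
        rw [div_mul_comm, mul_div_cancel_right₀ _ hΔ.ne', Real.exp_nat_mul,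
          Real.exp_log two_pos]

/-- With `α = (log 2)/Δ`, there is `C > 0` such that `d_n(x,y) ≥ C·e^{α(n − ℓ(x,y))}`
for all `x ≠ y` and all `n`, where `d_n` is the graph distance in the graph whose
edges are the pairs with `ℓ`-value at least `n` (the bound is expressed by saying
that every chain from `x` to `y` with consecutive `ℓ`-values `≥ n` has length at
least `C·e^{α(n − ℓ(x,y))}`). -/
theorem logScale_lower_exponent {X : Type*} (ℓ : X → X → EReal) (Δ : ℝ)
    (h : IsLogScale ℓ Δ) :
    ∃ C > (0 : ℝ), ∀ (n : ℝ) (x y : X), x ≠ y →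
      ∀ (m : ℕ) (c : ℕ → X), c 0 = x → c m = y →
        (∀ i < m, (n : EReal) ≤ ℓ (c i) (c (i + 1))) →
        C * Real.exp ((Real.log 2 / Δ) * (n - (ℓ x y).toReal)) ≤ (m : ℝ) := by
  refine ⟨1 / 2, one_half_pos, fun n x y hxy m c hc0 hcm hc => ?_⟩
  set k := Nat.log 2 m + 1
  have hm : m < 2 ^ k := Nat.lt_pow_succ_log_self one_lt_two m
  have hchain := h.sub_mul_le_of_chain n k m c hm.le hc
  rw [hc0, hcm] at hchain
  have hexp := exp_log_two_div_mul_le_two_pow h.1 k (h.le_toReal_of_ne hxy hchain)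
  have hm0 : m ≠ 0 := by
    rintro rfl
    exact hxy (hc0.symm.trans hcm)
  have hpow : ((2 ^ k : ℕ) : ℝ) ≤ 2 * m := by exact_mod_cast two_pow_log_succ_le hm0
  push_cast at hpow
  linarith
end

section
/- Subsequence lemma: Let ℓ be a log-scale on X with constant Δ. Let x_0, x_1, …, x_m be a finite sequence with ℓ(x_i, x_{i+1}) ≥ n for all i, and let n_0 ≤ n. Then there exists a subsequence y_0 = x_0, y_1, …, y_t = x_m of (x_i) such that n_0 − 2Δ ≤ ℓ(y_i, y_{i+1}) < n_0 for all i = 0, …, t−1, provided ℓ(x_0, x_m) < n_0. -/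
theorem Nat.exists_le_lt_and_not_succ {P : ℕ → Prop} {a b : ℕ} (hab : a ≤ b) (ha : P a)
    (hb : ¬P b) : ∃ k, a ≤ k ∧ k < b ∧ P k ∧ ¬P (k + 1) := by
  induction b, hab using Nat.le_induction with
  | base => exact absurd ha hb
  | succ b hab ih =>
    by_cases hPb : P b
    · exact ⟨b, hab, b.lt_succ_self, hPb, hb⟩
    · obtain ⟨k, hak, hkb, hk⟩ := ih hPb
      exact ⟨k, hak, hkb.trans b.lt_succ_self, hk⟩

theorem Relation.ReflTransGen.exists_seq {α : Type*} {r : α → α → Prop} {a b : α}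
    (h : Relation.ReflTransGen r a b) :
    ∃ (t : ℕ) (σ : ℕ → α), σ 0 = a ∧ σ t = b ∧ ∀ i < t, r (σ i) (σ (i + 1)) := by
  induction h using Relation.ReflTransGen.head_induction_on with
  | refl => exact ⟨0, fun _ => b, rfl, rfl, by simp⟩
  | head hac _ ih =>
    obtain ⟨t, σ, hσ0, hσt, hσ⟩ := ih
    refine ⟨t + 1, fun i => if i = 0 then _ else σ (i - 1), rfl, by simpa using hσt, ?_⟩
    rintro (_ | i) hi
    · simpa [hσ0] using hac
    · simpa using hσ i (by omega)

namespace IsLogScale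

variable {X : Type*} {ℓ : X → X → EReal} {Δ : ℝ}

theorem self_eq_top (h : IsLogScale ℓ Δ) (x : X) : ℓ x x = ⊤ :=
  (h.2.2.1 x x).2 rfl

theorem sub_le_of_le_of_le (h : IsLogScale ℓ Δ) {a : ℝ} {x y z : X}
    (hxy : (a : EReal) ≤ ℓ x y) (hyz : (a : EReal) ≤ ℓ y z) : ((a - Δ : ℝ) : EReal) ≤ ℓ x z :=
  calc ((a - Δ : ℝ) : EReal) = (a : EReal) - Δ := EReal.coe_sub a Δ
    _ ≤ min (ℓ x y) (ℓ y z) - Δ := EReal.sub_le_sub (le_min hxy hyz) le_rfl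
    _ ≤ ℓ x z := h.2.2.2.2 x y z

variable {n₀ : ℝ} {m : ℕ} {x : ℕ → X}

theorem exists_next (h : IsLogScale ℓ Δ)
    (hchain : ∀ i < m, (n₀ : EReal) ≤ ℓ (x i) (x (i + 1))) {j : ℕ} (hj : j ≤ m)
    (hjm : ℓ (x j) (x m) < n₀) :
    ∃ j', j < j' ∧ j' ≤ m ∧ ((n₀ - Δ : ℝ) : EReal) ≤ ℓ (x j) (x j') ∧
      ℓ (x j) (x j') < n₀ := by
  obtain ⟨k, hjk, hkm, hk, hk'⟩ :=
    Nat.exists_le_lt_and_not_succ (P := fun k => (n₀ : EReal) ≤ ℓ (x j) (x k))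
      hj (by simp [h.self_eq_top]) (not_le.2 hjm)
  exact ⟨k + 1, by omega, hkm, h.sub_le_of_le_of_le hk (hchain k hkm), not_le.1 hk'⟩

theorem reflTransGen_of_lt (h : IsLogScale ℓ Δ)
    (hchain : ∀ i < m, (n₀ : EReal) ≤ ℓ (x i) (x (i + 1))) (j : ℕ) (hj : j ≤ m)
    (hjm : ℓ (x j) (x m) < n₀) :
    Relation.ReflTransGen (fun i k => i < k ∧ ((n₀ - 2 * Δ : ℝ) : EReal) ≤ ℓ (x i) (x k) ∧
      ℓ (x i) (x k) < n₀) j m := by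
  have h2Δ : ((n₀ - 2 * Δ : ℝ) : EReal) ≤ ((n₀ - Δ : ℝ) : EReal) := by
    exact_mod_cast by linarith [h.1]
  obtain ⟨j', hjj', hj'm, hlo, hhi⟩ := h.exists_next hchain hj hjm
  by_cases hj'm_lt : ℓ (x j') (x m) < n₀
  · exact .head ⟨hjj', h2Δ.trans hlo, hhi⟩ (h.reflTransGen_of_lt hchain j' hj'm hj'm_lt)
  · have hlo' : ((n₀ - Δ : ℝ) : EReal) ≤ ℓ (x j') (x m) :=
      (EReal.coe_le_coe_iff.2 (by linarith [h.1])).trans (not_lt.1 hj'm_lt)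
    have hjm' : ((n₀ - 2 * Δ : ℝ) : EReal) ≤ ℓ (x j) (x m) := by
      convert h.sub_le_of_le_of_le hlo hlo' using 2; ring
    exact .single ⟨by omega, hjm', hjm⟩
termination_by m - j

end IsLogScale

/-- Subsequence lemma: if `x_0, …, x_m` is a chain with `ℓ(x_i, x_{i+1}) ≥ n`,
`n₀ ≤ n`, and `ℓ(x_0, x_m) < n₀`, then there is a subsequence
`y_0 = x_0, y_1, …, y_t = x_m` with `n₀ − 2Δ ≤ ℓ(y_i, y_{i+1}) < n₀` for all `i`. -/
theorem logScale_subsequence {X : Type*} (ℓ : X → X → EReal) (Δ : ℝ)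
    (h : IsLogScale ℓ Δ) (n n₀ : ℝ) (hn : n₀ ≤ n) (m : ℕ) (x : ℕ → X)
    (hchain : ∀ i < m, (n : EReal) ≤ ℓ (x i) (x (i + 1)))
    (hends : ℓ (x 0) (x m) < (n₀ : EReal)) :
    ∃ (t : ℕ) (σ : ℕ → ℕ), σ 0 = 0 ∧ σ t = m ∧ (∀ i < t, σ i < σ (i + 1)) ∧
      ∀ i < t, ((n₀ - 2 * Δ : ℝ) : EReal) ≤ ℓ (x (σ i)) (x (σ (i + 1))) ∧
        ℓ (x (σ i)) (x (σ (i + 1))) < (n₀ : EReal) := by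
  have hchain₀ : ∀ i < m, (n₀ : EReal) ≤ ℓ (x i) (x (i + 1)) :=
    fun i hi => (EReal.coe_le_coe_iff.2 hn).trans (hchain i hi)
  obtain ⟨t, σ, hσ0, hσt, hσ⟩ :=
    (h.reflTransGen_of_lt hchain₀ 0 m.zero_le hends).exists_seq
  exact ⟨t, σ, hσ0, hσt, fun i hi => (hσ i hi).1, fun i hi => (hσ i hi).2⟩
end

section
/- If d is a metric on a set X associated with a log-scale ℓ with exponent α (i.e., K⁻¹ e^{−αℓ(x,y)} ≤ d(x,y) ≤ K e^{−αℓ(x,y)} for some K > 1), then α is a lower exponent of ℓ: there exists C > 0 such that d_n(x,y) ≥ C·e^{α(n − ℓ(x,y))} for all x ≠ y in X and all n, where d_n is the graph distance of the graph whose edges are pairs with ℓ-value ≥ n. -/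
/-- `e^{−α·t}` for `t ∈ ℝ ∪ {∞}`, interpreted as `0` when `t = ∞`. -/
noncomputable def expScale (α : ℝ) (t : EReal) : ℝ :=
  if t = ⊤ then 0 else Real.exp (-α * t.toReal)

/-!
Every edge of a chain with `ℓ`-values `≥ n` has `d`-length at most `K e^{-αn}`, so by the
triangle inequality `d(x,y) ≤ m K e^{-αn}`, while `d(x,y) ≥ K⁻¹ e^{-αℓ(x,y)}`.
Hence `m ≥ K⁻² e^{α(n - ℓ(x,y))}`.
-/

open Real

lemma le_sum_of_chain {X : Type*} (d : X → X → ℝ) (hself : ∀ x, d x x = 0)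
    (htri : ∀ x y z, d x z ≤ d x y + d y z) (c : ℕ → X) (m : ℕ) :
    d (c 0) (c m) ≤ ∑ i ∈ Finset.range m, d (c i) (c (i + 1)) := by
  induction m with
  | zero => simp [hself]
  | succ k ih =>
    rw [Finset.sum_range_succ]
    linarith [htri (c 0) (c k) (c (k + 1))]

lemma expScale_of_ne_top (α : ℝ) {t : EReal} (ht : t ≠ ⊤) :
    expScale α t = exp (-α * t.toReal) :=
  if_neg ht

lemma expScale_le_of_coe_le {α : ℝ} (hα : 0 ≤ α) {n : ℝ} {t : EReal} (hnt : (n : EReal) ≤ t) :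
    expScale α t ≤ exp (-α * n) := by
  by_cases ht : t = ⊤
  · simp only [expScale, if_pos ht]
    positivity
  · rw [expScale_of_ne_top α ht, exp_le_exp]
    have : n ≤ t.toReal := by
      simpa using EReal.toReal_le_toReal hnt (EReal.coe_ne_bot n) ht
    nlinarith

theorem assocMetric_lowerExponent_general {X : Type*} (ℓ : X → X → EReal) (Δ : ℝ)
    (h : IsLogScale ℓ Δ) (d : X → X → ℝ) (α K : ℝ) (hα : 0 < α) (hK : 1 < K)
    (htri : ∀ x y z, d x z ≤ d x y + d y z)
    (hzero : ∀ x y, d x y = 0 ↔ x = y)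
    (hassoc : ∀ x y, K⁻¹ * expScale α (ℓ x y) ≤ d x y ∧ d x y ≤ K * expScale α (ℓ x y)) :
    ∃ C > (0 : ℝ), ∀ (n : ℝ) (x y : X), x ≠ y →
      ∀ (m : ℕ) (c : ℕ → X), c 0 = x → c m = y →
        (∀ i < m, (n : EReal) ≤ ℓ (c i) (c (i + 1))) →
        C * Real.exp (α * (n - (ℓ x y).toReal)) ≤ (m : ℝ) := by
  have hK0 : 0 < K := one_pos.trans hK
  refine ⟨(K ^ 2)⁻¹, by positivity, fun n x y hxy m c hc0 hcm hedge => ?_⟩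
  have hedge_le : ∀ i ∈ Finset.range m, d (c i) (c (i + 1)) ≤ K * exp (-α * n) :=
    fun i hi => (hassoc _ _).2.trans <| mul_le_mul_of_nonneg_left
      (expScale_le_of_coe_le hα.le (hedge i (Finset.mem_range.1 hi))) hK0.le
  have hupper : d x y ≤ m * (K * exp (-α * n)) := by
    calc d x y = d (c 0) (c m) := by rw [hc0, hcm]
      _ ≤ ∑ i ∈ Finset.range m, d (c i) (c (i + 1)) :=
        le_sum_of_chain d (fun x => (hzero x x).2 rfl) htri c m
      _ ≤ m * (K * exp (-α * n)) := by
        simpa using Finset.sum_le_sum hedge_le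
  have hlower : K⁻¹ * exp (-α * (ℓ x y).toReal) ≤ d x y := by
    simpa only [expScale_of_ne_top α (mt (h.2.2.1 x y).1 hxy)] using (hassoc x y).1
  calc (K ^ 2)⁻¹ * exp (α * (n - (ℓ x y).toReal))
      = K⁻¹ * (K⁻¹ * exp (-α * (ℓ x y).toReal)) * exp (α * n) := by
        rw [mul_sub, sub_eq_neg_add, ← neg_mul, exp_add]; ring
    _ ≤ K⁻¹ * (m * (K * exp (-α * n))) * exp (α * n) := by
        gcongr K⁻¹ * ?_ * _; exact hlower.trans hupper
    _ = m := by
        rw [mul_assoc, mul_assoc, mul_assoc, ← exp_add]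
        field_simp
        simp

/-- If `d` is a metric on `X` associated with the log-scale `ℓ` with exponent `α`,
then `α` is a lower exponent of `ℓ`: there is `C > 0` with
`d_n(x,y) ≥ C·e^{α(n − ℓ(x,y))}` for all `x ≠ y` and all `n` (stated as a bound on
the length of every chain with consecutive `ℓ`-values `≥ n`). -/
theorem assocMetric_lowerExponent {X : Type*} (ℓ : X → X → EReal) (Δ : ℝ)
    (h : IsLogScale ℓ Δ) (d : X → X → ℝ) (α K : ℝ) (hα : 0 < α) (hK : 1 < K)
    (hsymm : ∀ x y, d x y = d y x)
    (htri : ∀ x y z, d x z ≤ d x y + d y z)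
    (hzero : ∀ x y, d x y = 0 ↔ x = y)
    (hassoc : ∀ x y, K⁻¹ * expScale α (ℓ x y) ≤ d x y ∧ d x y ≤ K * expScale α (ℓ x y)) :
    ∃ C > (0 : ℝ), ∀ (n : ℝ) (x y : X), x ≠ y →
      ∀ (m : ℕ) (c : ℕ → X), c 0 = x → c m = y →
        (∀ i < m, (n : EReal) ≤ ℓ (c i) (c (i + 1))) →
        C * Real.exp (α * (n - (ℓ x y).toReal)) ≤ (m : ℝ) :=
  assocMetric_lowerExponent_general ℓ Δ h d α K hα hK htri hzero hassoc
end

section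
/- Let W be a stable leaf of a Smale space with internal log-scale ℓ₊ (the largest n₀ such that (fⁿ(y₁), fⁿ(y₂)) ∈ U for all n ≥ −n₀). Then ℓ₊ is a log-scale on W: symmetric, infinite exactly on the diagonal, and satisfying ℓ₊(x,z) ≥ min{ℓ₊(x,y), ℓ₊(y,z)} − Δ for a uniform constant Δ, given that the ambient standard log-scale ℓ is a log-scale with constant Δ and ℓ₊(fy₁, fy₂) = ℓ₊(y₁,y₂) + 1, ℓ₊ = ℓ whenever ℓ₊ > 0, and ℓ ≤ ℓ₊ always. -/
namespace EReal

theorem exists_nat_pos_add {a : EReal} (ha : a ≠ ⊥) : ∃ n : ℕ, 0 < a + n := by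
  induction a using EReal.rec with
  | bot => exact absurd rfl ha
  | coe r =>
    obtain ⟨n, hn⟩ := exists_nat_gt (-r)
    exact ⟨n, by exact_mod_cast (by linarith : (0 : ℝ) < r + n)⟩
  | top => exact ⟨0, by simp⟩

theorem le_of_add_coe_le_add_coe {u v : EReal} (r : ℝ) (h : u + r ≤ v + r) : u ≤ v :=
  addLECancellable_coe r (by rwa [add_comm, add_comm v] at h)

end EReal

section Iterate

variable {X : Type*} {f : X → X} {E : X → X → Prop}

theorem rel_iterate_of_rel_map (hEf : ∀ x y, E x y → E (f x) (f y)) {x y : X} (h : E x y)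
    (n : ℕ) :
    E (f^[n] x) (f^[n] y) := by
  induction n with
  | zero => exact h
  | succ n ih =>
    rw [Function.iterate_succ_apply', Function.iterate_succ_apply']
    exact hEf _ _ ih

theorem iterate_shift_eq_add {ℓp : X → X → EReal} (hEf : ∀ x y, E x y → E (f x) (f y))
    (hshift : ∀ x y, E x y → ℓp (f x) (f y) = ℓp x y + 1) {x y : X} (h : E x y) (n : ℕ) :
    ℓp (f^[n] x) (f^[n] y) = ℓp x y + n := by
  induction n with
  | zero => simp
  | succ n ih =>
    rw [Function.iterate_succ_apply', Function.iterate_succ_apply',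
      hshift _ _ (rel_iterate_of_rel_map hEf h n), ih, Nat.cast_succ, add_assoc]

end Iterate

theorem min_sub_le_of_pos {X : Type*} {E : X → X → Prop} (hE : Equivalence E)
    {ℓ ℓp : X → X → EReal} {Δ : ℝ} (hult : ∀ x y z, min (ℓ x y) (ℓ y z) - (Δ : EReal) ≤ ℓ x z)
    (heqpos : ∀ x y, E x y → 0 < ℓp x y → ℓp x y = ℓ x y)
    (hle : ∀ x y, E x y → ℓ x y ≤ ℓp x y) {x y z : X} (hxy : E x y) (hyz : E y z)
    (hxy_pos : 0 < ℓp x y) (hyz_pos : 0 < ℓp y z) :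
    min (ℓp x y) (ℓp y z) - (Δ : EReal) ≤ ℓp x z := by
  rw [heqpos x y hxy hxy_pos, heqpos y z hyz hyz_pos]
  exact (hult x y z).trans (hle x z (hE.trans hxy hyz))

theorem internal_logScale_isLogScale_general {X : Type*} (f : X → X)
    (E : X → X → Prop) (hE : Equivalence E)
    (hEf : ∀ x y, E x y → E (f x) (f y))
    (ℓ ℓp : X → X → EReal) (Δ : ℝ) (hℓ : IsLogScale ℓ Δ)
    (hbot : ∀ x y, E x y → ℓp x y ≠ ⊥)
    (hshift : ∀ x y, E x y → ℓp (f x) (f y) = ℓp x y + 1)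
    (heqpos : ∀ x y, E x y → 0 < ℓp x y → ℓp x y = ℓ x y)
    (hle : ∀ x y, E x y → ℓ x y ≤ ℓp x y) :
    ∀ x y z : X, E x y → E y z →
      min (ℓp x y) (ℓp y z) - (Δ : EReal) ≤ ℓp x z := by
  intro x y z hxy hyz
  obtain ⟨n, hn⟩ := EReal.exists_nat_pos_add (min_ne_bot (hbot x y hxy) (hbot y z hyz))
  rw [← min_add_add_right, lt_min_iff, ← iterate_shift_eq_add hEf hshift hxy,
    ← iterate_shift_eq_add hEf hshift hyz] at hn
  have hshifted := min_sub_le_of_pos hE hℓ.2.2.2.2 heqpos hle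
    (rel_iterate_of_rel_map hEf hxy n) (rel_iterate_of_rel_map hEf hyz n) hn.1 hn.2
  rw [iterate_shift_eq_add hEf hshift hxy, iterate_shift_eq_add hEf hshift hyz,
    iterate_shift_eq_add hEf hshift (hE.trans hxy hyz), min_add_add_right, sub_eq_add_neg,
    add_right_comm, ← sub_eq_add_neg] at hshifted
  exact EReal.le_of_add_coe_le_add_coe n hshifted

/-- The internal log-scale `ℓ₊` on stable leaves of a Smale space is a log-scale:
given the stable equivalence `E` (preserved by `f`), the ambient standard
log-scale `ℓ` with constant `Δ`, and `ℓ₊` satisfying the listed properties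
(symmetric on leaves, infinite exactly on the diagonal, `ℓ₊(f y₁, f y₂) = ℓ₊(y₁,y₂) + 1`,
`ℓ₊ = ℓ` whenever `ℓ₊ > 0`, and `ℓ ≤ ℓ₊`), the weak ultrametric inequality with the
same constant `Δ` holds for `ℓ₊` on each stable leaf. -/
theorem internal_logScale_isLogScale {X : Type*} (f : X → X)
    (E : X → X → Prop) (hE : Equivalence E)
    (hEf : ∀ x y, E x y → E (f x) (f y))
    (ℓ ℓp : X → X → EReal) (Δ : ℝ) (hℓ : IsLogScale ℓ Δ)
    (hsymm : ∀ x y, E x y → ℓp x y = ℓp y x)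
    (htop : ∀ x y, E x y → (ℓp x y = ⊤ ↔ x = y))
    (hbot : ∀ x y, E x y → ℓp x y ≠ ⊥)
    (hshift : ∀ x y, E x y → ℓp (f x) (f y) = ℓp x y + 1)
    (heqpos : ∀ x y, E x y → 0 < ℓp x y → ℓp x y = ℓ x y)
    (hle : ∀ x y, E x y → ℓ x y ≤ ℓp x y) :
    ∀ x y z : X, E x y → E y z →
      min (ℓp x y) (ℓp y z) - (Δ : EReal) ≤ ℓp x z :=
  internal_logScale_isLogScale_general f E hE hEf ℓ ℓp Δ hℓ hbot hshift heqpos hle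
end

section
/- Characterization of upper exponents via a cross-section: Fix l ∈ ℝ. A number α > 0 is a stable upper exponent of a Smale space (X, f) if and only if there exists a constant C_l > 0 such that for any stable leaf W and any x, y ∈ W with ℓ_W(x,y) ≥ l, one has d_n(x,y) ≤ C_l e^{αn} for all n ≥ 0. -/
/-!
Both conditions bound `d_n(x, y)`; they differ only in how the scale is normalised.

If `α` is a stable upper exponent and `ℓ_W(x, y) ≥ l`, apply the bound at the scale
`max n ℓ_W(x, y) ≥ n`: its exponent `max n ℓ_W(x, y) - ℓ_W(x, y)` is at most `n + |l|`.

Conversely, `f ^ k` with `k = ⌈l - ℓ_W(x, y)⌉` moves `x, y` into the cross-section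
`l ≤ ℓ_W < l + 1`, and since it shifts every log-scale by `k` it maps chains of scale `n`
to chains of scale `n + k`. Pulling back a chain given there by `f ^ (-k)` bounds
`d_n(x, y)` by `C_l e^{α (|l| + 1)} e^{α (n - ℓ_W(x, y))}`.
-/

/-- `α > 0` is a stable upper exponent: there is `C > 0` such that for every
stable leaf (equivalence class of `E`), every `x ≠ y` in it and every
`n ≥ ℓ_W(x,y)` there is a chain inside the leaf from `x` to `y` with consecutive
internal-log-scale values `≥ n` of length at most `C·e^{α(n − ℓ_W(x,y))}`, i.e.
`d_n(x,y) ≤ C·e^{α(n − ℓ_W(x,y))}`. -/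
def IsStableUpperExponent {X : Type*} (E : X → X → Prop)
    (ℓp : X → X → EReal) (α : ℝ) : Prop :=
  ∃ C > (0 : ℝ), ∀ (n : ℝ) (x y : X), E x y → x ≠ y → (ℓp x y).toReal ≤ n →
    ∃ (m : ℕ) (c : ℕ → X), c 0 = x ∧ c m = y ∧ (∀ i, E x (c i)) ∧
      (∀ i < m, (n : EReal) ≤ ℓp (c i) (c (i + 1))) ∧
      (m : ℝ) ≤ C * Real.exp (α * (n - (ℓp x y).toReal))

open Real

/-- `ChainDistLe E ℓp n x y B` says `d_n(x, y) ≤ B` in the leaf of `x`. -/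
def ChainDistLe {X : Type*} (E : X → X → Prop) (ℓp : X → X → EReal) (n : ℝ) (x y : X)
    (B : ℝ) : Prop :=
  ∃ (m : ℕ) (c : ℕ → X), c 0 = x ∧ c m = y ∧ (∀ i, E x (c i)) ∧
    (∀ i < m, (n : EReal) ≤ ℓp (c i) (c (i + 1))) ∧ (m : ℝ) ≤ B

namespace ChainDistLe

variable {X : Type*} {E : X → X → Prop} {ℓp : X → X → EReal} {n n' B B' : ℝ} {x y : X}

theorem mono (hn : n' ≤ n) (hB : B ≤ B') (h : ChainDistLe E ℓp n x y B) :
    ChainDistLe E ℓp n' x y B' := by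
  obtain ⟨m, c, hc0, hcm, hcE, hcℓ, hmB⟩ := h
  exact ⟨m, c, hc0, hcm, hcE, fun i hi => (EReal.coe_le_coe_iff.mpr hn).trans (hcℓ i hi),
    hmB.trans hB⟩

theorem map (hE : Equivalence E) {g : X → X} {r : ℝ} (hEg : ∀ ⦃u v⦄, E u v → E (g u) (g v))
    (hℓg : ∀ ⦃u v⦄, E u v → ℓp (g u) (g v) = ℓp u v + r) (h : ChainDistLe E ℓp n x y B) :
    ChainDistLe E ℓp (n + r) (g x) (g y) B := by
  obtain ⟨m, c, hc0, hcm, hcE, hcℓ, hmB⟩ := h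
  refine ⟨m, g ∘ c, by simp [hc0], by simp [hcm], fun i => hEg (hcE i), fun i hi => ?_, hmB⟩
  have hstep : E (c i) (c (i + 1)) := hE.trans (hE.symm (hcE i)) (hcE (i + 1))
  rw [Function.comp_apply, Function.comp_apply, hℓg hstep, EReal.coe_add]
  exact add_le_add_left (hcℓ i hi) _

end ChainDistLe

section Shift

variable {X : Type*} {E : X → X → Prop} {ℓp : X → X → EReal} {f : Equiv.Perm X}

theorem rel_zpow_apply (hEf : ∀ x y, E x y → E (f x) (f y))
    (hEf' : ∀ x y, E x y → E (f.symm x) (f.symm y)) (k : ℤ) ⦃u v : X⦄ (huv : E u v) :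
    E ((f ^ k) u) ((f ^ k) v) := by
  induction k generalizing u v with
  | zero => simpa using huv
  | succ k ih => simpa only [zpow_add_one, Equiv.Perm.mul_apply] using ih (hEf u v huv)
  | pred k ih =>
    simpa only [zpow_sub_one, Equiv.Perm.mul_apply, Equiv.Perm.inv_def] using ih (hEf' u v huv)

theorem logScale_zpow_apply (hEf : ∀ x y, E x y → E (f x) (f y))
    (hEf' : ∀ x y, E x y → E (f.symm x) (f.symm y))
    (hshift : ∀ x y, E x y → ℓp (f x) (f y) = ℓp x y + 1) (k : ℤ) ⦃u v : X⦄ (huv : E u v) :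
    ℓp ((f ^ k) u) ((f ^ k) v) = ℓp u v + (k : ℝ) := by
  induction k generalizing u v with
  | zero => simp
  | succ k ih =>
    rw [zpow_add_one, Equiv.Perm.mul_apply, Equiv.Perm.mul_apply, ih (hEf u v huv),
      hshift u v huv, add_assoc, ← EReal.coe_one, ← EReal.coe_add]
    congr 2
    push_cast
    ring
  | pred k ih =>
    have hback := hshift _ _ (hEf' u v huv)
    rw [Equiv.apply_symm_apply, Equiv.apply_symm_apply] at hback
    rw [zpow_sub_one, Equiv.Perm.mul_apply, Equiv.Perm.mul_apply, Equiv.Perm.inv_def,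
      ih (hEf' u v huv), hback, add_assoc, ← EReal.coe_one, ← EReal.coe_add]
    congr 2
    push_cast
    ring

end Shift

def CrossSectionBound {X : Type*} (E : X → X → Prop) (ℓp : X → X → EReal) (l α : ℝ) : Prop :=
  ∃ C > (0 : ℝ), ∀ (x y : X), E x y → x ≠ y → (l : EReal) ≤ ℓp x y →
    ∀ n : ℝ, 0 ≤ n → ChainDistLe E ℓp n x y (C * exp (α * n))

section Characterization

variable {X : Type*} {E : X → X → Prop} {ℓp : X → X → EReal}

theorem crossSectionBound_of_isStableUpperExponent
    (htop : ∀ x y, E x y → (ℓp x y = ⊤ ↔ x = y)) (hbot : ∀ x y, E x y → ℓp x y ≠ ⊥)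
    {l α : ℝ} (hα : 0 < α) (h : IsStableUpperExponent E ℓp α) :
    CrossSectionBound E ℓp l α := by
  obtain ⟨C, hC, hup⟩ := h
  refine ⟨C * exp (α * |l|), by positivity, fun x y hxy hne hl n hn => ?_⟩
  set L := (ℓp x y).toReal
  have hlL : l ≤ L := by
    rwa [← EReal.coe_toReal (mt (htop x y hxy).1 hne) (hbot x y hxy), EReal.coe_le_coe_iff] at hl
  have hexp : max n L - L ≤ |l| + n :=
    sub_le_iff_le_add.mpr (max_le (by linarith [neg_abs_le l]) (by linarith [abs_nonneg l]))
  refine ChainDistLe.mono (le_max_left n L) ?_ (hup (max n L) x y hxy hne (le_max_right n L))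
  rw [mul_assoc, ← exp_add, ← mul_add]
  gcongr

theorem isStableUpperExponent_of_crossSectionBound (hE : Equivalence E) {f : Equiv.Perm X}
    (hEf : ∀ x y, E x y → E (f x) (f y)) (hEf' : ∀ x y, E x y → E (f.symm x) (f.symm y))
    (htop : ∀ x y, E x y → (ℓp x y = ⊤ ↔ x = y)) (hbot : ∀ x y, E x y → ℓp x y ≠ ⊥)
    (hshift : ∀ x y, E x y → ℓp (f x) (f y) = ℓp x y + 1)
    {l α : ℝ} (hα : 0 < α) (h : CrossSectionBound E ℓp l α) :
    IsStableUpperExponent E ℓp α := by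
  obtain ⟨C, hC, hcross⟩ := h
  refine ⟨C * exp (α * (|l| + 1)), by positivity, fun n x y hxy hne hLn => ?_⟩
  set L := (ℓp x y).toReal
  have hL : ℓp x y = L := (EReal.coe_toReal (mt (htop x y hxy).1 hne) (hbot x y hxy)).symm
  set k := ⌈l - L⌉
  have hk : l - L ≤ k := Int.le_ceil _
  have hk' : (k : ℝ) < l - L + 1 := Int.ceil_lt_add_one _
  have hsection : (l : EReal) ≤ ℓp ((f ^ k) x) ((f ^ k) y) := by
    rw [logScale_zpow_apply hEf hEf' hshift k hxy, hL, ← EReal.coe_add, EReal.coe_le_coe_iff]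
    linarith
  have hchain := (hcross _ _ (rel_zpow_apply hEf hEf' k hxy) ((f ^ k).injective.ne hne)
    hsection (max (n + k) 0) (le_max_right _ _)).map hE (rel_zpow_apply hEf hEf' (-k))
    (logScale_zpow_apply hEf hEf' hshift (-k))
  rw [zpow_neg, Equiv.Perm.inv_def, Equiv.symm_apply_apply, Equiv.symm_apply_apply] at hchain
  have hscale : max (n + k) 0 ≤ |l| + 1 + (n - L) :=
    max_le (by linarith [le_abs_self l]) (by linarith [abs_nonneg l])
  refine hchain.mono (by push_cast; linarith [le_max_left (n + k) 0]) ?_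
  rw [mul_assoc, ← exp_add, ← mul_add]
  gcongr

end Characterization

theorem stableUpperExponent_iff_general {X : Type*} (f : X ≃ X)
    (E : X → X → Prop) (hE : Equivalence E)
    (hEf : ∀ x y, E x y → E (f x) (f y))
    (hEf' : ∀ x y, E x y → E (f.symm x) (f.symm y))
    (ℓp : X → X → EReal)
    (htop : ∀ x y, E x y → (ℓp x y = ⊤ ↔ x = y))
    (hbot : ∀ x y, E x y → ℓp x y ≠ ⊥)
    (hshift : ∀ x y, E x y → ℓp (f x) (f y) = ℓp x y + 1)
    (l α : ℝ) (hα : 0 < α) :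
    IsStableUpperExponent E ℓp α ↔
      ∃ C > (0 : ℝ), ∀ (x y : X), E x y → x ≠ y → (l : EReal) ≤ ℓp x y →
        ∀ n : ℝ, 0 ≤ n →
          ∃ (m : ℕ) (c : ℕ → X), c 0 = x ∧ c m = y ∧ (∀ i, E x (c i)) ∧
            (∀ i < m, (n : EReal) ≤ ℓp (c i) (c (i + 1))) ∧
            (m : ℝ) ≤ C * Real.exp (α * n) :=
  ⟨crossSectionBound_of_isStableUpperExponent htop hbot hα,
    isStableUpperExponent_of_crossSectionBound hE hEf hEf' htop hbot hshift hα⟩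

/-- Characterization of stable upper exponents via a cross-section: fixing `l ∈ ℝ`,
`α > 0` is a stable upper exponent if and only if there is `C_l > 0` such that for
all `x ≠ y` in one stable leaf with `ℓ_W(x,y) ≥ l` and all `n ≥ 0` there is a chain
in the leaf with consecutive values `≥ n` of length at most `C_l·e^{αn}`. -/
theorem stableUpperExponent_iff {X : Type*} (f : X ≃ X)
    (E : X → X → Prop) (hE : Equivalence E)
    (hEf : ∀ x y, E x y → E (f x) (f y))
    (hEf' : ∀ x y, E x y → E (f.symm x) (f.symm y))
    (ℓp : X → X → EReal)
    (hsymm : ∀ x y, E x y → ℓp x y = ℓp y x)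
    (htop : ∀ x y, E x y → (ℓp x y = ⊤ ↔ x = y))
    (hbot : ∀ x y, E x y → ℓp x y ≠ ⊥)
    (hshift : ∀ x y, E x y → ℓp (f x) (f y) = ℓp x y + 1)
    (l α : ℝ) (hα : 0 < α) :
    IsStableUpperExponent E ℓp α ↔
      ∃ C > (0 : ℝ), ∀ (x y : X), E x y → x ≠ y → (l : EReal) ≤ ℓp x y →
        ∀ n : ℝ, 0 ≤ n →
          ∃ (m : ℕ) (c : ℕ → X), c 0 = x ∧ c m = y ∧ (∀ i, E x (c i)) ∧
            (∀ i < m, (n : EReal) ≤ ℓp (c i) (c (i + 1))) ∧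
            (m : ℝ) ≤ C * Real.exp (α * n) :=
  stableUpperExponent_iff_general f E hE hEf hEf' ℓp htop hbot hshift l α hα
end

section
/- Lattice-point expansion along a hyperbolic automorphism: Let φ ∈ GL(d, ℤ) be hyperbolic, with ℝ^d = E₊ ⊕ E₋ the splitting into the contracting and expanding generalized eigenspaces of φ, and P₊ : ℝ^d → E₊ the projection. Let K = {x ∈ ℝ^d : |x_i| < 1} and let S ⊆ ℤ^d be a finite set containing all g ∈ ℤ^d with (K + g) ∩ (φ(K) ∪ φ⁻¹(K)) ≠ ∅. Then for every v ∈ E₊ there exist g₀ ∈ ℤ^d and a sequence g_i ∈ S (i ≥ 1) such that v = lim_{n→∞} P₊(φⁿ(g_n) + φ^{n−1}(g_{n−1}) + ⋯ + φ(g₁) + g₀). -/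
/-- Coercion of a lattice point of `ℤ^d` into `ℝ^d`. -/
def latCoe {d : ℕ} (g : Fin d → ℤ) : Fin d → ℝ := fun i => (g i : ℝ)

/-!
Write `xₙ = φ⁻ⁿ v ∈ E₊` and let `yₙ` be the lattice point nearest to `xₙ` (with `y₀ = 0`).
The digits `gᵢ = φ(yᵢ₊₁) - yᵢ` telescope: `∑_{i ≤ n} φⁱ gᵢ = φⁿ⁺¹ yₙ₊₁`, so
`P(∑_{i ≤ n} φⁱ gᵢ) - v = φⁿ⁺¹ P(yₙ₊₁ - xₙ₊₁)`, which tends to `0` because `φ` contracts `E₊`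
and the rounding errors are bounded. For `i ≥ 1`, the point `φ(yᵢ₊₁ - xᵢ₊₁) ∈ φ(K)` lies within
distance `1/2` of `gᵢ` in every coordinate, so `gᵢ ∈ S`.
-/

open Filter Topology

theorem LinearEquiv.sum_range_pow_apply_sub {R M : Type*} [Semiring R] [AddCommGroup M]
    [Module R M] (φ : M ≃ₗ[R] M) (y : ℕ → M) (n : ℕ) :
    ∑ i ∈ Finset.range n, (φ ^ i) (φ (y (i + 1)) - y i) = (φ ^ n) (y n) - y 0 := by
  calc ∑ i ∈ Finset.range n, (φ ^ i) (φ (y (i + 1)) - y i)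
      = ∑ i ∈ Finset.range n, ((φ ^ (i + 1)) (y (i + 1)) - (φ ^ i) (y i)) := by
        simp only [map_sub, pow_succ, LinearEquiv.mul_apply]
    _ = (φ ^ n) (y n) - y 0 := Finset.sum_range_sub (fun i => (φ ^ i) (y i)) n

theorem LinearMap.map_zpow_apply_of_comp_eq {R M : Type*} [Semiring R] [AddCommGroup M]
    [Module R M] (P : M →ₗ[R] M) {φ : M ≃ₗ[R] M}
    (h : P ∘ₗ φ.toLinearMap = φ.toLinearMap ∘ₗ P) (k : ℤ) (x : M) :
    P ((φ ^ k) x) = (φ ^ k) (P x) := by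
  have hφ : ∀ x, P (φ x) = φ (P x) := LinearMap.congr_fun h
  have hφsymm : ∀ x, P (φ.symm x) = φ.symm (P x) := fun x => by
    rw [φ.eq_symm_apply, ← hφ, φ.apply_symm_apply]
  induction k using Int.induction_on generalizing x with
  | zero => rfl
  | succ k ih => rw [zpow_add_one, LinearEquiv.mul_apply, ih, hφ, LinearEquiv.mul_apply]
  | pred k ih =>
    rw [zpow_sub_one, LinearEquiv.mul_apply, ih, LinearEquiv.coe_inv, hφsymm,
      LinearEquiv.mul_apply, LinearEquiv.coe_inv]

theorem tendsto_zero_of_norm_le_mul_pow_mul {E : Type*} [SeminormedAddCommGroup E]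
    {a : ℕ → E} {b : ℕ → ℝ} {C lam B : ℝ} (hlam0 : 0 ≤ lam) (hlam1 : lam < 1)
    (hb0 : ∀ n, 0 ≤ b n) (hb : ∀ n, b n ≤ B) (ha : ∀ n, ‖a n‖ ≤ C * lam ^ n * b n) :
    Tendsto a atTop (𝓝 0) := by
  have hbound : ∀ n, ‖a n‖ ≤ |C| * B * lam ^ n := fun n =>
    calc ‖a n‖ ≤ C * lam ^ n * b n := ha n
      _ ≤ |C| * lam ^ n * b n :=
        mul_le_mul_of_nonneg_right (mul_le_mul_of_nonneg_right (le_abs_self C)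
          (pow_nonneg hlam0 n)) (hb0 n)
      _ ≤ |C| * lam ^ n * B := by gcongr; exact hb n
      _ = |C| * B * lam ^ n := by ring
  refine squeeze_zero_norm hbound ?_
  simpa using (tendsto_pow_atTop_nhds_zero_of_lt_one hlam0 hlam1).const_mul (|C| * B)

section Lattice

variable {d : ℕ}

@[simp]
theorem latCoe_sub (a b : Fin d → ℤ) : latCoe (a - b) = latCoe a - latCoe b := by
  funext i
  simp [latCoe]

@[simp]
theorem latCoe_zero : latCoe (0 : Fin d → ℤ) = 0 := by
  funext i
  simp [latCoe]

noncomputable def latRound (x : Fin d → ℝ) : Fin d → ℤ := fun i => round (x i)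

theorem abs_latCoe_latRound_sub_le (x : Fin d → ℝ) (i : Fin d) :
    |latCoe (latRound x) i - x i| ≤ 1 / 2 := by
  rw [abs_sub_comm]
  exact abs_sub_round (x i)

theorem norm_latCoe_latRound_sub_le (x : Fin d → ℝ) : ‖latCoe (latRound x) - x‖ ≤ 1 / 2 :=
  (pi_norm_le_iff_of_nonneg (by norm_num)).2 (abs_latCoe_latRound_sub_le x)

/-- `(K + g) ∩ (φ(K) ∪ φ⁻¹(K)) ≠ ∅`, for `K` the open unit cube. -/
def MeetsImageCube (φ : (Fin d → ℝ) ≃ₗ[ℝ] (Fin d → ℝ)) (g : Fin d → ℤ) : Prop :=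
  ∃ x : Fin d → ℝ, (∀ i, |x i - (g i : ℝ)| < 1) ∧
    ∃ y : Fin d → ℝ, (∀ i, |y i| < 1) ∧ (φ y = x ∨ φ.symm y = x)

theorem meetsImageCube_of_eq_sub_latRound (φ : (Fin d → ℝ) ≃ₗ[ℝ] (Fin d → ℝ))
    (x : Fin d → ℝ) {g : Fin d → ℤ}
    (hg : latCoe g = φ (latCoe (latRound x)) - latCoe (latRound (φ x))) :
    MeetsImageCube φ g := by
  refine ⟨φ (latCoe (latRound x) - x), fun i => ?_, latCoe (latRound x) - x,
    fun i => (abs_latCoe_latRound_sub_le x i).trans_lt (by norm_num), Or.inl rfl⟩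
  have hgi : (g i : ℝ) = (φ (latCoe (latRound x)) - latCoe (latRound (φ x))) i := congr_fun hg i
  have hdiff : φ (latCoe (latRound x) - x) i - g i = latCoe (latRound (φ x)) i - φ x i := by
    rw [hgi, map_sub]
    simp only [Pi.sub_apply]
    ring
  rw [hdiff]
  exact (abs_latCoe_latRound_sub_le (φ x) i).trans_lt (by norm_num)

theorem sum_range_zpow_apply_latCoe_sub (φ : (Fin d → ℝ) ≃ₗ[ℝ] (Fin d → ℝ))
    {F : (Fin d → ℤ) → (Fin d → ℤ)} (hF : ∀ g, φ (latCoe g) = latCoe (F g))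
    {y : ℕ → (Fin d → ℤ)} (hy0 : y 0 = 0) (n : ℕ) :
    ∑ i ∈ Finset.range n, (φ ^ (i : ℤ)) (latCoe (F (y (i + 1)) - y i))
      = (φ ^ (n : ℤ)) (latCoe (y n)) := by
  simp only [zpow_natCast, latCoe_sub, ← hF]
  rw [φ.sum_range_pow_apply_sub (fun i => latCoe (y i)), hy0, latCoe_zero, sub_zero]

end Lattice

theorem lattice_expansion_general {d : ℕ}
    (φ : (Fin d → ℝ) ≃ₗ[ℝ] (Fin d → ℝ))
    (hlat : ∀ g : Fin d → ℤ, (∃ g' : Fin d → ℤ, φ (latCoe g) = latCoe g') ∧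
      (∃ g' : Fin d → ℤ, φ.symm (latCoe g) = latCoe g'))
    (P : (Fin d → ℝ) →ₗ[ℝ] (Fin d → ℝ))
    (hPφ : P ∘ₗ (φ : (Fin d → ℝ) →ₗ[ℝ] (Fin d → ℝ)) =
      (φ : (Fin d → ℝ) →ₗ[ℝ] (Fin d → ℝ)) ∘ₗ P)
    (C lam : ℝ) (hlam0 : 0 < lam) (hlam1 : lam < 1)
    (hcontr : ∀ (v : Fin d → ℝ) (n : ℕ), ‖(φ ^ (n : ℤ)) (P v)‖ ≤ C * lam ^ n * ‖P v‖)
    (S : Finset (Fin d → ℤ))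
    (hS : ∀ g : Fin d → ℤ,
      (∃ x : Fin d → ℝ, (∀ i, |x i - (g i : ℝ)| < 1) ∧
        ∃ y : Fin d → ℝ, (∀ i, |y i| < 1) ∧ (φ y = x ∨ φ.symm y = x)) → g ∈ S) :
    ∀ v : Fin d → ℝ, P v = v →
      ∃ g : ℕ → (Fin d → ℤ), (∀ i : ℕ, 1 ≤ i → g i ∈ S) ∧
        Filter.Tendsto
          (fun n : ℕ => P (∑ i ∈ Finset.range (n + 1), (φ ^ (i : ℤ)) (latCoe (g i))))
          Filter.atTop (nhds v) := by
  intro v hv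
  choose F hF using fun g => (hlat g).1
  set x : ℕ → (Fin d → ℝ) := fun n => (φ ^ (-(n : ℤ))) v
  set y : ℕ → (Fin d → ℤ) := fun n => if n = 0 then 0 else latRound (x n)
  have hφx : ∀ n : ℕ, (φ ^ (n : ℤ)) (x n) = v := fun n => by
    simp [x, zpow_neg]
  have hx_succ : ∀ n, φ (x (n + 1)) = x n := fun n => by
    have hexp : -(n : ℤ) = 1 + -((n + 1 : ℕ) : ℤ) := by push_cast; ring
    simp only [x, hexp, zpow_one_add, LinearEquiv.mul_apply]
  have hPx : ∀ n, P (x n) = x n := fun n => by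
    rw [P.map_zpow_apply_of_comp_eq hPφ, hv]
  have hy0 : y 0 = 0 := if_pos rfl
  have hy : ∀ n, y (n + 1) = latRound (x (n + 1)) := fun n => if_neg n.succ_ne_zero
  refine ⟨fun i => F (y (i + 1)) - y i, fun i hi => hS _ ?_, ?_⟩
  · obtain ⟨m, rfl⟩ := Nat.exists_eq_add_of_le' hi
    refine meetsImageCube_of_eq_sub_latRound φ (x (m + 2)) ?_
    rw [latCoe_sub, hF, hy, hy, hx_succ]
  have herr : ∀ n,
      P (∑ i ∈ Finset.range (n + 1), (φ ^ (i : ℤ)) (latCoe (F (y (i + 1)) - y i))) - v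
      = (φ ^ ((n + 1 : ℕ) : ℤ)) (P (latCoe (latRound (x (n + 1))) - x (n + 1))) := fun n => by
    rw [sum_range_zpow_apply_latCoe_sub φ hF hy0, P.map_zpow_apply_of_comp_eq hPφ, map_sub P, hPx,
      map_sub, hφx, hy]
  rw [← tendsto_sub_nhds_zero_iff]
  simp_rw [herr]
  exact (tendsto_add_atTop_iff_nat 1).2 (tendsto_zero_of_norm_le_mul_pow_mul hlam0.le hlam1
    (fun _ => norm_nonneg _) (fun n => P.toContinuousLinearMap.le_opNorm_of_le
      (norm_latCoe_latRound_sub_le (x n))) (fun n => hcontr _ n))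

/-- Lattice-point expansion along a hyperbolic automorphism: let `φ` be a linear
automorphism of `ℝ^d` preserving the lattice `ℤ^d`, with `P` the projection onto
the contracting space `E₊` along the expanding space `E₋` (so `P² = P`, `Pφ = φP`,
`φ` contracts the range of `P` and `φ⁻¹` contracts the range of `1 − P`).
Let `S` be a finite set of lattice points containing every `g ∈ ℤ^d` with
`(K + g) ∩ (φ(K) ∪ φ⁻¹(K)) ≠ ∅`, `K` the open unit cube. Then every `v ∈ E₊` is
the limit of `P(φⁿ(g_n) + φ^{n−1}(g_{n−1}) + ⋯ + φ(g₁) + g₀)` for some `g₀ ∈ ℤ^d`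
and a sequence `g_i ∈ S` (`i ≥ 1`). -/
theorem lattice_expansion {d : ℕ}
    (φ : (Fin d → ℝ) ≃ₗ[ℝ] (Fin d → ℝ))
    (hlat : ∀ g : Fin d → ℤ, (∃ g' : Fin d → ℤ, φ (latCoe g) = latCoe g') ∧
      (∃ g' : Fin d → ℤ, φ.symm (latCoe g) = latCoe g'))
    (P : (Fin d → ℝ) →ₗ[ℝ] (Fin d → ℝ))
    (hP : P ∘ₗ P = P)
    (hPφ : P ∘ₗ (φ : (Fin d → ℝ) →ₗ[ℝ] (Fin d → ℝ)) =
      (φ : (Fin d → ℝ) →ₗ[ℝ] (Fin d → ℝ)) ∘ₗ P)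
    (C lam : ℝ) (hC : 0 < C) (hlam0 : 0 < lam) (hlam1 : lam < 1)
    (hcontr : ∀ (v : Fin d → ℝ) (n : ℕ), ‖(φ ^ (n : ℤ)) (P v)‖ ≤ C * lam ^ n * ‖P v‖)
    (hexpand : ∀ (v : Fin d → ℝ) (n : ℕ),
      ‖(φ ^ (-(n : ℤ))) (v - P v)‖ ≤ C * lam ^ n * ‖v - P v‖)
    (S : Finset (Fin d → ℤ))
    (hS : ∀ g : Fin d → ℤ,
      (∃ x : Fin d → ℝ, (∀ i, |x i - (g i : ℝ)| < 1) ∧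
        ∃ y : Fin d → ℝ, (∀ i, |y i| < 1) ∧ (φ y = x ∨ φ.symm y = x)) → g ∈ S) :
    ∀ v : Fin d → ℝ, P v = v →
      ∃ g : ℕ → (Fin d → ℤ), (∀ i : ℕ, 1 ≤ i → g i ∈ S) ∧
        Filter.Tendsto
          (fun n : ℕ => P (∑ i ∈ Finset.range (n + 1), (φ ^ (i : ℤ)) (latCoe (g i))))
          Filter.atTop (nhds v) :=
  lattice_expansion_general φ hlat P hPφ C lam hlam0 hlam1 hcontr S hS
end
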